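/- arXiv:0709.4204 — 3 statements merged into one kernel-verified Lean document; each statement's English description precedes it below -/
import Mathlib

section
/- There exists a unique H₀ ∈ (0, ∞) such that the derivative of the function A(H) = 8π·(1/(4H²+1) + (4H²/(4H²+1)^{3/2})·artanh(1/√(4H²+1))) vanishes at H₀. -/
open Real Set

/-- The inverse hyperbolic tangent. -/
noncomputable def artanh (x : ℝ) : ℝ := (1 / 2) * Real.log ((1 + x) / (1 - x))

/-- Pedrosa's formula for the area of the rotational CMC sphere of mean
curvature `H` in `S² × ℝ`. -/
noncomputable def pedrosaArea (H : ℝ) : ℝ :=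
  8 * Real.pi * (1 / (4 * H ^ 2 + 1) +
    (4 * H ^ 2 / (4 * H ^ 2 + 1) ^ ((3 : ℝ) / 2)) *
      _root_.artanh (1 / Real.sqrt (4 * H ^ 2 + 1)))

/-!
Put `t = (4H² + 1)^(-1/2)`, a bijection of `(0, ∞)` onto `(0, 1)` with `dt/dH = -4Ht³ ≠ 0`.
Then `A = 8π (t² + (t - t³) artanh t)` and `dA/dt = 8π g(t)` with
`g(t) = 3t + (1 - 3t²) artanh t`, so the critical points of `A` correspond to the zeros of `g`
in `(0, 1)`. If `3t² ≤ 1` then `g(t) > 0`. If `3t² > 1` then `g = (1 - 3t²) φ` with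
`φ(t) = artanh t - 3t / (3t² - 1)`, and `φ' = 1 / (1 - t²) + (9t² + 3) / (3t² - 1)² > 0`
on `(1/√3, 1)`, where `φ` runs from `-∞` to `+∞`; it changes sign between `3/5` and `99/100`.
-/

theorem Set.BijOn.existsUnique_of_existsUnique {α β : Type*} {f : α → β} {s : Set α}
    {t : Set β} (hf : BijOn f s t) {p : α → Prop} {q : β → Prop} (hpq : ∀ x ∈ s, p x ↔ q (f x))
    (h : ∃! y, y ∈ t ∧ q y) : ∃! x, x ∈ s ∧ p x := by
  obtain ⟨y, ⟨hy, hqy⟩, huniq⟩ := h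
  obtain ⟨x, hx, rfl⟩ := hf.surjOn hy
  exact ⟨x, ⟨hx, (hpq x hx).mpr hqy⟩, fun x' ⟨hx', hpx'⟩ =>
    hf.injOn hx' hx (huniq _ ⟨hf.mapsTo hx', (hpq x' hx').mp hpx'⟩)⟩

theorem artanh_eq_real_artanh {x : ℝ} (hx : x ∈ Icc (-1) 1) :
    _root_.artanh x = Real.artanh x := by
  rw [Real.artanh_eq_half_log hx, _root_.artanh]

theorem hasDerivAt_artanh {x : ℝ} (hx : x ∈ Ioo (-1) 1) :
    HasDerivAt _root_.artanh (1 - x ^ 2)⁻¹ x := by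
  have hp : 1 + x ≠ 0 := by linarith [hx.1]
  have hm : 1 - x ≠ 0 := by linarith [hx.2]
  refine ((((hasDerivAt_id' x).const_add 1).div ((hasDerivAt_id' x).const_sub 1) hm).log
    (div_ne_zero hp hm)).const_mul (1 / 2) |>.congr_deriv ?_
  simp only [Pi.div_apply]
  rw [show 1 - x ^ 2 = (1 + x) * (1 - x) by ring]
  field_simp
  ring

noncomputable def pedrosaAreaParam (t : ℝ) : ℝ := 8 * π * (t ^ 2 + (t - t ^ 3) * _root_.artanh t)

noncomputable def pedrosaParam (H : ℝ) : ℝ := (√(4 * H ^ 2 + 1))⁻¹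

noncomputable def pedrosaCrit (t : ℝ) : ℝ := 3 * t + (1 - 3 * t ^ 2) * _root_.artanh t

theorem pedrosaArea_eq_pedrosaAreaParam_comp : pedrosaArea = pedrosaAreaParam ∘ pedrosaParam := by
  ext H
  have hu : 0 < 4 * H ^ 2 + 1 := by positivity
  have hs2 : √(4 * H ^ 2 + 1) ^ 2 = 4 * H ^ 2 + 1 := Real.sq_sqrt hu.le
  have hrpow : (4 * H ^ 2 + 1) ^ ((3 : ℝ) / 2) = (4 * H ^ 2 + 1) * √(4 * H ^ 2 + 1) := by
    rw [show (3 : ℝ) / 2 = 1 + 1 / 2 by norm_num, Real.rpow_add hu, Real.rpow_one,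
      Real.sqrt_eq_rpow]
  simp only [pedrosaArea, pedrosaAreaParam, pedrosaParam, Function.comp_apply, hrpow, one_div]
  congr 2
  · rw [inv_pow, hs2]
  · congr 1
    field_simp
    nlinarith [hs2]

theorem hasDerivAt_pedrosaParam (H : ℝ) :
    HasDerivAt pedrosaParam (-4 * H * pedrosaParam H ^ 3) H := by
  have hu : 0 < 4 * H ^ 2 + 1 := by positivity
  have hs : 0 < √(4 * H ^ 2 + 1) := Real.sqrt_pos.mpr hu
  have hpoly : HasDerivAt (fun H : ℝ => 4 * H ^ 2 + 1) (8 * H) H := by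
    refine ((hasDerivAt_pow 2 H).const_mul 4).add_const 1 |>.congr_deriv ?_
    norm_num
    ring
  refine (hpoly.sqrt hu.ne').inv hs.ne' |>.congr_deriv ?_
  simp only [pedrosaParam]
  field_simp
  ring

theorem hasDerivAt_pedrosaAreaParam {t : ℝ} (ht : t ∈ Ioo (-1) 1) :
    HasDerivAt pedrosaAreaParam (8 * π * pedrosaCrit t) t := by
  have h : 1 - t ^ 2 ≠ 0 := by nlinarith [ht.1, ht.2]
  have hcub : HasDerivAt (fun t : ℝ => t - t ^ 3) (1 - 3 * t ^ 2) t := by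
    refine (hasDerivAt_id' t).sub (hasDerivAt_pow 3 t) |>.congr_deriv ?_
    norm_num
  refine ((hasDerivAt_pow 2 t).add (hcub.mul (hasDerivAt_artanh ht))).const_mul (8 * π)
    |>.congr_deriv ?_
  simp only [pedrosaCrit]
  field_simp
  ring

theorem pedrosaParam_mem_Ioo {H : ℝ} (hH : H ≠ 0) : pedrosaParam H ∈ Ioo 0 1 := by
  have hs : 1 < √(4 * H ^ 2 + 1) := by
    rw [Real.lt_sqrt zero_le_one]
    have := pow_pos (abs_pos.mpr hH) 2
    rw [sq_abs] at this
    linarith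
  exact ⟨inv_pos.mpr (zero_lt_one.trans hs), inv_lt_one_of_one_lt₀ hs⟩

theorem pedrosaParam_bijOn : BijOn pedrosaParam (Ioi 0) (Ioo 0 1) := by
  refine ⟨fun H hH => pedrosaParam_mem_Ioo (ne_of_gt hH), fun H₁ h₁ H₂ h₂ h => ?_, fun t ht => ?_⟩
  · simp only [pedrosaParam, inv_inj] at h
    rw [Real.sqrt_inj (by positivity) (by positivity)] at h
    exact (pow_left_inj₀ (le_of_lt h₁) (le_of_lt h₂) two_ne_zero).mp (by linarith)
  · obtain ⟨ht₀, ht₁⟩ := ht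
    have hpos : 0 < t⁻¹ ^ 2 - 1 := by
      rw [sub_pos]
      exact one_lt_pow₀ (one_lt_inv₀ ht₀ |>.mpr ht₁) two_ne_zero
    refine ⟨√(t⁻¹ ^ 2 - 1) / 2, div_pos (Real.sqrt_pos.mpr hpos) two_pos, ?_⟩
    have : 4 * (√(t⁻¹ ^ 2 - 1) / 2) ^ 2 + 1 = t⁻¹ ^ 2 := by
      rw [div_pow, Real.sq_sqrt hpos.le]
      ring
    rw [pedrosaParam, this, Real.sqrt_sq (inv_pos.mpr ht₀).le, inv_inv]

theorem deriv_pedrosaArea_eq_zero_iff {H : ℝ} (hH : H ≠ 0) :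
    deriv pedrosaArea H = 0 ↔ pedrosaCrit (pedrosaParam H) = 0 := by
  obtain ⟨ht₀, ht₁⟩ := pedrosaParam_mem_Ioo hH
  have hderiv := (hasDerivAt_pedrosaAreaParam ⟨by linarith, ht₁⟩).comp H
    (hasDerivAt_pedrosaParam H)
  rw [← pedrosaArea_eq_pedrosaAreaParam_comp] at hderiv
  have hparam : -4 * H * pedrosaParam H ^ 3 ≠ 0 := by
    have := pow_pos ht₀ 3
    simp [hH, this.ne']
  rw [hderiv.deriv, mul_eq_zero, or_iff_left hparam, mul_eq_zero, or_iff_right (by positivity)]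

theorem pedrosaCrit_pos {t : ℝ} (ht : t ∈ Ioo 0 1) (h : 3 * t ^ 2 ≤ 1) : 0 < pedrosaCrit t := by
  have hartanh : 0 < _root_.artanh t := by
    rw [artanh_eq_real_artanh ⟨by linarith [ht.1], ht.2.le⟩]
    exact Real.artanh_pos ht
  have := mul_nonneg (sub_nonneg.mpr h) hartanh.le
  rw [pedrosaCrit]
  linarith [ht.1]

noncomputable def pedrosaCritQuot (t : ℝ) : ℝ := _root_.artanh t - 3 * t / (3 * t ^ 2 - 1)

theorem pedrosaCrit_eq_mul_pedrosaCritQuot {t : ℝ} (h : 3 * t ^ 2 - 1 ≠ 0) :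
    pedrosaCrit t = (1 - 3 * t ^ 2) * pedrosaCritQuot t := by
  rw [pedrosaCrit, pedrosaCritQuot]
  field_simp
  ring

theorem hasDerivAt_pedrosaCritQuot {t : ℝ} (ht : t ∈ Ioo (-1) 1) (h : 3 * t ^ 2 - 1 ≠ 0) :
    HasDerivAt pedrosaCritQuot ((1 - t ^ 2)⁻¹ + (9 * t ^ 2 + 3) / (3 * t ^ 2 - 1) ^ 2) t := by
  have hden : HasDerivAt (fun t : ℝ => 3 * t ^ 2 - 1) (6 * t) t := by
    refine ((hasDerivAt_pow 2 t).const_mul 3).sub_const 1 |>.congr_deriv ?_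
    norm_num
    ring
  refine (hasDerivAt_artanh ht).sub (((hasDerivAt_id' t).const_mul 3).div hden h)
    |>.congr_deriv ?_
  field_simp
  ring

theorem hasDerivAt_pedrosaCritQuot_of_mem {t : ℝ} (ht : t ∈ Ioo √(1 / 3) 1) :
    HasDerivAt pedrosaCritQuot ((1 - t ^ 2)⁻¹ + (9 * t ^ 2 + 3) / (3 * t ^ 2 - 1) ^ 2) t := by
  have ht₀ : 0 < t := (Real.sqrt_nonneg _).trans_lt ht.1
  have := (Real.sqrt_lt' ht₀).mp ht.1
  exact hasDerivAt_pedrosaCritQuot ⟨by linarith, ht.2⟩ (by linarith)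

theorem continuousOn_pedrosaCritQuot : ContinuousOn pedrosaCritQuot (Ioo √(1 / 3) 1) :=
  continuousOn_of_forall_continuousAt fun _ ht => (hasDerivAt_pedrosaCritQuot_of_mem ht).continuousAt

theorem pedrosaCritQuot_strictMonoOn : StrictMonoOn pedrosaCritQuot (Ioo √(1 / 3) 1) := by
  refine strictMonoOn_of_deriv_pos (convex_Ioo _ _) continuousOn_pedrosaCritQuot fun t ht => ?_
  rw [interior_Ioo] at ht
  rw [(hasDerivAt_pedrosaCritQuot_of_mem ht).deriv]
  have : 0 < 1 - t ^ 2 := by nlinarith [ht.1, ht.2, Real.sqrt_nonneg (1 / 3)]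
  positivity

theorem pedrosaCritQuot_three_fifths_neg : pedrosaCritQuot (3 / 5) < 0 := by
  have hlog : Real.log 4 < 3 := by
    linarith [Real.log_lt_sub_one_of_pos (by norm_num : (0 : ℝ) < 4) (by norm_num)]
  rw [pedrosaCritQuot, _root_.artanh]
  norm_num
  linarith

theorem pedrosaCritQuot_ninety_nine_hundredths_pos : 0 < pedrosaCritQuot (99 / 100) := by
  have hlog : 4 < Real.log 199 := by
    rw [Real.lt_log_iff_exp_lt (by norm_num), show (4 : ℝ) = (4 : ℕ) * 1 by norm_num,
      Real.exp_nat_mul]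
    calc Real.exp 1 ^ 4 < 3 ^ 4 := by gcongr; exact Real.exp_one_lt_three
      _ < 199 := by norm_num
  rw [pedrosaCritQuot, _root_.artanh]
  norm_num
  linarith

theorem exists_pedrosaCritQuot_eq_zero : ∃ t ∈ Ioo √(1 / 3) 1, pedrosaCritQuot t = 0 := by
  have hsub : Icc (3 / 5 : ℝ) (99 / 100) ⊆ Ioo √(1 / 3) 1 := fun t ht =>
    ⟨(Real.sqrt_lt' (by linarith [ht.1])).mpr (by nlinarith [ht.1]), by linarith [ht.2]⟩
  obtain ⟨t, ht, hzero⟩ :=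
    intermediate_value_Icc (by norm_num) (continuousOn_pedrosaCritQuot.mono hsub)
    ⟨pedrosaCritQuot_three_fifths_neg.le, pedrosaCritQuot_ninety_nine_hundredths_pos.le⟩
  exact ⟨t, hsub ht, hzero⟩

theorem pedrosaCrit_eq_zero_iff {t : ℝ} (ht : t ∈ Ioo 0 1) :
    pedrosaCrit t = 0 ↔ t ∈ Ioo √(1 / 3) 1 ∧ pedrosaCritQuot t = 0 := by
  rcases le_or_gt (3 * t ^ 2) 1 with h | h
  · refine iff_of_false (pedrosaCrit_pos ht h).ne' fun hI => ?_
    linarith [(Real.sqrt_lt' ht.1).mp hI.1.1]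
  · have hI : t ∈ Ioo √(1 / 3) 1 := ⟨(Real.sqrt_lt' ht.1).mpr (by linarith), ht.2⟩
    rw [pedrosaCrit_eq_mul_pedrosaCritQuot (by linarith), mul_eq_zero,
      or_iff_right (by linarith), and_iff_right hI]

theorem existsUnique_pedrosaCrit_eq_zero : ∃! t, t ∈ Ioo 0 1 ∧ pedrosaCrit t = 0 := by
  have hsub : Ioo √(1 / 3) 1 ⊆ Ioo (0 : ℝ) 1 := Ioo_subset_Ioo_left (Real.sqrt_nonneg _)
  obtain ⟨t₀, ht₀, hzero⟩ := exists_pedrosaCritQuot_eq_zero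
  refine ⟨t₀, ⟨hsub ht₀, (pedrosaCrit_eq_zero_iff (hsub ht₀)).mpr ⟨ht₀, hzero⟩⟩, ?_⟩
  rintro t ⟨ht, htzero⟩
  obtain ⟨htI, htzero⟩ := (pedrosaCrit_eq_zero_iff ht).mp htzero
  exact pedrosaCritQuot_strictMonoOn.injOn htI ht₀ (htzero.trans hzero.symm)

/-- There is a unique `H₀ ∈ (0, ∞)` at which the derivative of `A` vanishes. -/
theorem pedrosaArea_deriv_existsUnique_zero :
    ∃! H₀ : ℝ, H₀ ∈ Set.Ioi (0 : ℝ) ∧ deriv pedrosaArea H₀ = 0 :=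
  pedrosaParam_bijOn.existsUnique_of_existsUnique
    (fun _ hH => deriv_pedrosaArea_eq_zero_iff (ne_of_gt hH)) existsUnique_pedrosaCrit_eq_zero
end

section
/- Let H₀ ∈ (0, ∞) be the unique zero of the derivative of A(H) = 8π·(1/(4H²+1) + (4H²/(4H²+1)^{3/2})·artanh(1/√(4H²+1))) on (0, ∞). Then A is strictly monotone increasing on the interval (0, H₀] and strictly monotone decreasing on the interval [H₀, ∞). -/
open Real Set

lemma differentiableAt_artanh {x : ℝ} (h₁ : x ≠ 1) (h₂ : x ≠ -1) :
    DifferentiableAt ℝ _root_.artanh x := by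
  have h₁' : 1 - x ≠ 0 := sub_ne_zero.mpr h₁.symm
  have h₂' : 1 + x ≠ 0 := by contrapose! h₂; linarith
  unfold _root_.artanh
  exact ((((differentiableAt_const _).add differentiableAt_id).div
    ((differentiableAt_const _).sub differentiableAt_id) h₁').log (div_ne_zero h₂' h₁')).const_mul _

lemma differentiableAt_pedrosaArea {H : ℝ} (hH : H ≠ 0) : DifferentiableAt ℝ pedrosaArea H := by
  have hs : 1 < √(4 * H ^ 2 + 1) := by
    rw [Real.lt_sqrt zero_le_one]; linarith [sq_pos_of_ne_zero hH]
  have hlt : 1 / √(4 * H ^ 2 + 1) < 1 := (div_lt_one (by positivity)).mpr hs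
  have hpos : 0 < 1 / √(4 * H ^ 2 + 1) := by positivity
  have hinner : DifferentiableAt ℝ (fun H : ℝ ↦ 1 / √(4 * H ^ 2 + 1)) H := by
    fun_prop (disch := positivity)
  have hartanh : DifferentiableAt ℝ (fun H : ℝ ↦ _root_.artanh (1 / √(4 * H ^ 2 + 1))) H :=
    DifferentiableAt.comp (g := _root_.artanh) H
      (differentiableAt_artanh hlt.ne (by linarith)) hinner
  unfold pedrosaArea
  fun_prop (disch := positivity)

/-- The substitution `H = t / (t² - 1)` makes `√(4H² + 1) = (t² + 1) / (t² - 1)` rational and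
the `artanh` term equal to `log t`; at `t = 2ᵏ` the area is affine in `log 2`. -/
lemma pedrosaArea_div_sq_sub_one {t : ℝ} (ht : 1 < t) :
    pedrosaArea (t / (t ^ 2 - 1)) =
      8 * π * (((t ^ 2 - 1) / (t ^ 2 + 1)) ^ 2 +
        4 * t ^ 2 * (t ^ 2 - 1) / (t ^ 2 + 1) ^ 3 * Real.log t) := by
  have hd : 0 < t ^ 2 - 1 := by nlinarith
  have hq : 4 * (t / (t ^ 2 - 1)) ^ 2 + 1 = ((t ^ 2 + 1) / (t ^ 2 - 1)) ^ 2 := by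
    field_simp; ring
  have hq0 : 0 ≤ (t ^ 2 + 1) / (t ^ 2 - 1) := by positivity
  have hpow : (((t ^ 2 + 1) / (t ^ 2 - 1)) ^ 2) ^ ((3 : ℝ) / 2) =
      ((t ^ 2 + 1) / (t ^ 2 - 1)) ^ 3 := by
    rw [← Real.rpow_natCast _ 2, ← Real.rpow_mul hq0]; norm_num
  have hlog : _root_.artanh (1 / ((t ^ 2 + 1) / (t ^ 2 - 1))) = Real.log t := by
    have hratio : (1 + 1 / ((t ^ 2 + 1) / (t ^ 2 - 1))) / (1 - 1 / ((t ^ 2 + 1) / (t ^ 2 - 1))) =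
        t ^ 2 := by
      field_simp; ring
    rw [_root_.artanh, hratio, Real.log_pow]; ring
  rw [pedrosaArea, hq, Real.sqrt_sq hq0, hpow, hlog]
  congr 1
  field_simp

lemma pedrosaArea_sixteen_div_lt_eight_div : pedrosaArea (16 / 255) < pedrosaArea (8 / 63) := by
  have h16 := pedrosaArea_div_sq_sub_one (t := 2 ^ 4) (by norm_num)
  have h8 := pedrosaArea_div_sq_sub_one (t := 2 ^ 3) (by norm_num)
  rw [Real.log_pow] at h16 h8
  norm_num at h16 h8
  rw [h16, h8]
  exact mul_lt_mul_of_pos_left (by linarith [Real.log_two_gt_d9, Real.log_two_lt_d9])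
    (by positivity)

lemma pedrosaArea_two_div_lt_eight_div : pedrosaArea (2 / 3) < pedrosaArea (8 / 63) := by
  have h2 := pedrosaArea_div_sq_sub_one (t := 2) (by norm_num)
  have h8 := pedrosaArea_div_sq_sub_one (t := 2 ^ 3) (by norm_num)
  rw [Real.log_pow] at h8
  norm_num at h2 h8
  rw [h2, h8]
  exact mul_lt_mul_of_pos_left (by linarith [Real.log_two_gt_d9, Real.log_two_lt_d9])
    (by positivity)

lemma strictMonoOn_or_strictAntiOn_of_deriv_ne_zero {f : ℝ → ℝ} {D : Set ℝ} (hD : Convex ℝ D)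
    (hf : ContinuousOn f D) (hf' : ∀ x ∈ interior D, DifferentiableAt ℝ f x)
    (hne : ∀ x ∈ interior D, deriv f x ≠ 0) : StrictMonoOn f D ∨ StrictAntiOn f D := by
  rcases hasDerivWithinAt_forall_lt_or_forall_gt_of_forall_ne hD.interior
    (fun x hx ↦ (hf' x hx).hasDerivAt.hasDerivWithinAt) hne with hneg | hpos
  · exact .inr (strictAntiOn_of_deriv_neg hD hf hneg)
  · exact .inl (strictMonoOn_of_deriv_pos hD hf hpos)

lemma strictMonoOn_Ioc_and_strictAntiOn_Ici_of_lt_of_lt {α β : Type*} [LinearOrder α]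
    [Preorder β]
    {f : α → β} {l m a b c : α} (hlm : l < m)
    (hleft : StrictMonoOn f (Ioc l m) ∨ StrictAntiOn f (Ioc l m))
    (hright : StrictMonoOn f (Ici m) ∨ StrictAntiOn f (Ici m))
    (hla : l < a) (hab : a < b) (hbc : b < c) (hfab : f a < f b) (hfcb : f c < f b) :
    StrictMonoOn f (Ioc l m) ∧ StrictAntiOn f (Ici m) := by
  have hm : IsGreatest (Ioc l m) m := isGreatest_Ioc hlm
  have hunion : Ioc l m ∪ Ici m = Ioi l := Ioc_union_Ici_eq_Ioi hlm
  rcases hleft with hL | hL <;> rcases hright with hR | hR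
  · have := hunion ▸ hL.union hR hm isLeast_Ici
    exact absurd (this (hla.trans hab) (hla.trans (hab.trans hbc)) hbc) hfcb.not_gt
  · exact ⟨hL, hR⟩
  · rcases le_total b m with hbm | hmb
    · exact absurd (hL ⟨hla, hab.le.trans hbm⟩ ⟨hla.trans hab, hbm⟩ hab) hfab.not_gt
    · exact absurd (hR hmb (hmb.trans hbc.le) hbc) hfcb.not_gt
  · have := hunion ▸ hL.union hR hm isLeast_Ici
    exact absurd (this hla (hla.trans hab) hab) hfab.not_gt

theorem pedrosaArea_strictMonoOn_strictAntiOn_general (H₀ : ℝ) (hH₀ : H₀ ∈ Set.Ioi (0 : ℝ))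
    (huniq : ∀ H ∈ Set.Ioi (0 : ℝ), deriv pedrosaArea H = 0 → H = H₀) :
    StrictMonoOn pedrosaArea (Set.Ioc (0 : ℝ) H₀) ∧
      StrictAntiOn pedrosaArea (Set.Ici H₀) := by
  have hdiff : ∀ H ∈ Ioi (0 : ℝ), DifferentiableAt ℝ pedrosaArea H := fun H hH ↦
    differentiableAt_pedrosaArea hH.ne'
  have hpiece : ∀ D ⊆ Ioi (0 : ℝ), Convex ℝ D → H₀ ∉ interior D →
      StrictMonoOn pedrosaArea D ∨ StrictAntiOn pedrosaArea D := fun D hD hconv hH₀D ↦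
    strictMonoOn_or_strictAntiOn_of_deriv_ne_zero hconv
      (fun H hH ↦ (hdiff H (hD hH)).continuousAt.continuousWithinAt)
      (fun H hH ↦ hdiff H (hD (interior_subset hH)))
      (fun H hH h ↦ hH₀D (huniq H (hD (interior_subset hH)) h ▸ hH))
  exact strictMonoOn_Ioc_and_strictAntiOn_Ici_of_lt_of_lt hH₀
    (hpiece _ Ioc_subset_Ioi_self (convex_Ioc _ _) (by simp))
    (hpiece _ (Ici_subset_Ioi.mpr hH₀) (convex_Ici _) (by simp))
    (by norm_num : (0 : ℝ) < 16 / 255) (by norm_num : (16 : ℝ) / 255 < 8 / 63)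
    (by norm_num : (8 : ℝ) / 63 < 2 / 3)
    pedrosaArea_sixteen_div_lt_eight_div pedrosaArea_two_div_lt_eight_div

/-- If `H₀` is the unique zero of `A'` in `(0, ∞)`, then `A` is strictly
increasing on `(0, H₀]` and strictly decreasing on `[H₀, ∞)`. -/
theorem pedrosaArea_strictMonoOn_strictAntiOn (H₀ : ℝ) (hH₀ : H₀ ∈ Set.Ioi (0 : ℝ))
    (hzero : deriv pedrosaArea H₀ = 0)
    (huniq : ∀ H ∈ Set.Ioi (0 : ℝ), deriv pedrosaArea H = 0 → H = H₀) :
    StrictMonoOn pedrosaArea (Set.Ioc (0 : ℝ) H₀) ∧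
      StrictAntiOn pedrosaArea (Set.Ici H₀) :=
  pedrosaArea_strictMonoOn_strictAntiOn_general H₀ hH₀ huniq
end

section
/- Let H₀ ∈ (0, ∞) be the unique zero of the derivative of A(H) = 8π·(1/(4H²+1) + (4H²/(4H²+1)^{3/2})·artanh(1/√(4H²+1))) on (0, ∞). Then A attains its strict global maximum on (0, ∞) at H₀; that is, A(H) < A(H₀) for every H ∈ (0, ∞) with H ≠ H₀. -/
open Real Set

section UniqueCriticalPoint

variable {f : ℝ → ℝ} {s : Set ℝ}

theorem Convex.deriv_pos_of_forall_ne_zero (hs : Convex ℝ s)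
    (hf : ∀ x ∈ s, DifferentiableAt ℝ f x) (hf₀ : ∀ x ∈ s, deriv f x ≠ 0)
    {a : ℝ} (ha : a ∈ s) (hfa : 0 < deriv f a) : ∀ x ∈ s, 0 < deriv f x :=
  (hasDerivWithinAt_forall_lt_or_forall_gt_of_forall_ne hs
    (fun x hx => (hf x hx).hasDerivAt.hasDerivWithinAt) hf₀).resolve_left
    fun h => (h a ha).not_gt hfa

theorem Convex.deriv_neg_of_forall_ne_zero (hs : Convex ℝ s)
    (hf : ∀ x ∈ s, DifferentiableAt ℝ f x) (hf₀ : ∀ x ∈ s, deriv f x ≠ 0)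
    {b : ℝ} (hb : b ∈ s) (hfb : deriv f b < 0) : ∀ x ∈ s, deriv f x < 0 :=
  (hasDerivWithinAt_forall_lt_or_forall_gt_of_forall_ne hs
    (fun x hx => (hf x hx).hasDerivAt.hasDerivWithinAt) hf₀).resolve_right
    fun h => (h b hb).not_gt hfb

theorem Convex.lt_of_deriv_unique_zero (hs : Convex ℝ s)
    (hf : ∀ x ∈ s, DifferentiableAt ℝ f x) {a b x₀ : ℝ} (ha : a ∈ s) (hb : b ∈ s)
    (hab : a ≤ b) (hfa : 0 < deriv f a) (hfb : deriv f b < 0)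
    (huniq : ∀ x ∈ s, deriv f x = 0 → x = x₀) :
    ∀ x ∈ s, x ≠ x₀ → f x < f x₀ := by
  have hIcc : Icc a b ⊆ s := hs.ordConnected.out ha hb
  obtain ⟨c, ⟨hac, hcb⟩, hc₀⟩ := exists_hasDerivWithinAt_eq_of_lt_of_gt hab
    (fun x hx => (hf x (hIcc hx)).hasDerivAt.hasDerivWithinAt) hfa hfb
  have hcs : c ∈ s := hIcc ⟨hac.le, hcb.le⟩
  obtain rfl : c = x₀ := huniq c hcs hc₀
  have hne : ∀ x ∈ s, x ≠ c → deriv f x ≠ 0 := fun x hx hxc h => hxc (huniq x hx h)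
  have hpos := (hs.inter (convex_Iio c)).deriv_pos_of_forall_ne_zero
    (fun x hx => hf x hx.1) (fun x hx => hne x hx.1 hx.2.ne) ⟨ha, hac⟩ hfa
  have hneg := (hs.inter (convex_Ioi c)).deriv_neg_of_forall_ne_zero
    (fun x hx => hf x hx.1) (fun x hx => hne x hx.1 hx.2.ne') ⟨hb, hcb⟩ hfb
  have hcont : ContinuousOn f s := fun x hx => (hf x hx).continuousAt.continuousWithinAt
  have hmono : StrictMonoOn f (s ∩ Iic c) :=
    strictMonoOn_of_deriv_pos (hs.inter (convex_Iic c)) (hcont.mono inter_subset_left)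
      fun x hx => by
        rw [interior_inter, interior_Iic] at hx
        exact hpos x ⟨interior_subset hx.1, hx.2⟩
  have hanti : StrictAntiOn f (s ∩ Ici c) :=
    strictAntiOn_of_deriv_neg (hs.inter (convex_Ici c)) (hcont.mono inter_subset_left)
      fun x hx => by
        rw [interior_inter, interior_Ici] at hx
        exact hneg x ⟨interior_subset hx.1, hx.2⟩
  intro x hx hxc
  rcases hxc.lt_or_gt with hlt | hgt
  · exact hmono ⟨hx, hlt.le⟩ ⟨hcs, self_mem_Iic⟩ hlt
  · exact hanti ⟨hcs, self_mem_Ici⟩ ⟨hx, hgt.le⟩ hgt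

end UniqueCriticalPoint

theorem hasDerivAt_artanh_s4 {x : ℝ} (hx₁ : -1 < x) (hx₂ : x < 1) :
    HasDerivAt _root_.artanh (1 / (1 - x ^ 2)) x := by
  have hp : 0 < 1 + x := by linarith
  have hm : 0 < 1 - x := by linarith
  have hq : HasDerivAt (fun y => (1 + y) / (1 - y))
      ((1 * (1 - x) - (1 + x) * (-1)) / (1 - x) ^ 2) x :=
    ((hasDerivAt_id x).const_add 1).div ((hasDerivAt_id x).const_sub 1) hm.ne'
  have h : HasDerivAt _root_.artanh _ x := (hq.log (div_pos hp hm).ne').const_mul (1 / 2)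
  refine h.congr_deriv ?_
  have : 1 - x ^ 2 ≠ 0 := by nlinarith
  field_simp
  ring

theorem artanh_pos_of_pos_of_lt_one {x : ℝ} (hx₀ : 0 < x) (hx₁ : x < 1) :
    0 < _root_.artanh x := by
  have : 1 < (1 + x) / (1 - x) := (one_lt_div (by linarith)).2 (by linarith)
  unfold _root_.artanh
  have := Real.log_pos this
  positivity

noncomputable def pedrosaProfile (t : ℝ) : ℝ := t ^ 2 + t * (1 - t ^ 2) * _root_.artanh t

theorem hasDerivAt_pedrosaProfile {t : ℝ} (ht₁ : -1 < t) (ht₂ : t < 1) :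
    HasDerivAt pedrosaProfile (3 * t + (1 - 3 * t ^ 2) * _root_.artanh t) t := by
  have h : HasDerivAt pedrosaProfile _ t := (hasDerivAt_pow 2 t).add
    (((hasDerivAt_id t).mul ((hasDerivAt_pow 2 t).const_sub 1)).mul (hasDerivAt_artanh_s4 ht₁ ht₂))
  refine h.congr_deriv ?_
  have : 1 - t ^ 2 ≠ 0 := by nlinarith
  simp only [Pi.mul_apply, id]
  field_simp
  ring

theorem pedrosaParam_pos (H : ℝ) : 0 < pedrosaParam H := by
  unfold pedrosaParam
  positivity

theorem pedrosaParam_lt_one {H : ℝ} (hH : H ≠ 0) : pedrosaParam H < 1 :=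
  inv_lt_one_of_one_lt₀ ((lt_sqrt zero_le_one).2 (by nlinarith [sq_pos_of_ne_zero hH]))

theorem pedrosaParam_sq (H : ℝ) : pedrosaParam H ^ 2 = (4 * H ^ 2 + 1)⁻¹ := by
  rw [pedrosaParam, inv_pow, sq_sqrt (by positivity)]

theorem pedrosaArea_eq (H : ℝ) : pedrosaArea H = 8 * π * pedrosaProfile (pedrosaParam H) := by
  have hu : 0 < 4 * H ^ 2 + 1 := by positivity
  have hss : √(4 * H ^ 2 + 1) ^ 2 = 4 * H ^ 2 + 1 := sq_sqrt hu.le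
  have h32 : (4 * H ^ 2 + 1) ^ ((3 : ℝ) / 2) = (4 * H ^ 2 + 1) * √(4 * H ^ 2 + 1) := by
    rw [show (3 : ℝ) / 2 = 1 + 1 / 2 by norm_num, rpow_add hu, rpow_one, sqrt_eq_rpow]
  rw [pedrosaArea, pedrosaProfile, pedrosaParam, h32, one_div √(4 * H ^ 2 + 1)]
  congr 2
  · rw [inv_pow, hss, one_div]
  · field_simp
    rw [hss]
    ring

theorem hasDerivAt_pedrosaArea {H : ℝ} (hH : H ≠ 0) :
    HasDerivAt pedrosaArea (8 * π * ((3 * pedrosaParam H + (1 - 3 * pedrosaParam H ^ 2) *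
      _root_.artanh (pedrosaParam H)) * (-4 * H * pedrosaParam H ^ 3))) H := by
  have hprofile := hasDerivAt_pedrosaProfile (by linarith [pedrosaParam_pos H])
    (pedrosaParam_lt_one hH)
  rw [show pedrosaArea = fun H => 8 * π * pedrosaProfile (pedrosaParam H) from
    funext pedrosaArea_eq]
  exact (hprofile.comp H (hasDerivAt_pedrosaParam H)).const_mul (8 * π)

theorem deriv_pedrosaArea_neg {H : ℝ} (hH : 1 ≤ H) : deriv pedrosaArea H < 0 := by
  have hH_pos : 0 < H := by linarith
  rw [(hasDerivAt_pedrosaArea hH_pos.ne').deriv]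
  have ht₀ := pedrosaParam_pos H
  have hartanh := artanh_pos_of_pos_of_lt_one ht₀ (pedrosaParam_lt_one hH_pos.ne')
  have ht₂ : 3 * pedrosaParam H ^ 2 ≤ 1 := by
    rw [pedrosaParam_sq, ← div_eq_mul_inv, div_le_one (by positivity)]
    nlinarith
  refine mul_neg_of_pos_of_neg (by positivity) (mul_neg_of_pos_of_neg ?_ ?_)
  · nlinarith
  · have := pow_pos ht₀ 3
    nlinarith

theorem pedrosaParam_ten_div_ninetyNine : pedrosaParam (10 / 99) = 99 / 101 := by
  rw [pedrosaParam, show 4 * (10 / 99 : ℝ) ^ 2 + 1 = (101 / 99) ^ 2 by norm_num,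
    sqrt_sq (by norm_num)]
  norm_num

theorem deriv_pedrosaArea_ten_div_ninetyNine_pos : 0 < deriv pedrosaArea (10 / 99) := by
  rw [(hasDerivAt_pedrosaArea (by norm_num)).deriv, pedrosaParam_ten_div_ninetyNine]
  have hexp : exp 4 < 100 := by
    rw [show (4 : ℝ) = (4 : ℕ) by norm_num, ← exp_one_pow]
    calc exp 1 ^ 4 < 3 ^ 4 := by gcongr; exact exp_one_lt_three
      _ < 100 := by norm_num
  have hlog : 4 < log 100 := (lt_log_iff_exp_lt (by norm_num)).2 hexp
  have hartanh : _root_.artanh (99 / 101) = 1 / 2 * log 100 := by norm_num [_root_.artanh]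
  rw [hartanh]
  refine mul_pos (by positivity) (mul_pos_of_neg_of_neg ?_ (by norm_num))
  nlinarith

theorem pedrosaArea_strict_max_general (H₀ : ℝ)
    (huniq : ∀ H ∈ Set.Ioi (0 : ℝ), deriv pedrosaArea H = 0 → H = H₀) :
    ∀ H ∈ Set.Ioi (0 : ℝ), H ≠ H₀ → pedrosaArea H < pedrosaArea H₀ :=
  (convex_Ioi 0).lt_of_deriv_unique_zero
    (fun _ hH => (hasDerivAt_pedrosaArea (ne_of_gt hH)).differentiableAt)
    (a := 10 / 99) (b := 1) (by norm_num) (by norm_num) (by norm_num)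
    deriv_pedrosaArea_ten_div_ninetyNine_pos (deriv_pedrosaArea_neg le_rfl) huniq

/-- If `H₀` is the unique zero of `A'` in `(0, ∞)`, then `A` attains its strict
global maximum on `(0, ∞)` at `H₀`. -/
theorem pedrosaArea_strict_max (H₀ : ℝ) (hH₀ : H₀ ∈ Set.Ioi (0 : ℝ))
    (hzero : deriv pedrosaArea H₀ = 0)
    (huniq : ∀ H ∈ Set.Ioi (0 : ℝ), deriv pedrosaArea H = 0 → H = H₀) :
    ∀ H ∈ Set.Ioi (0 : ℝ), H ≠ H₀ → pedrosaArea H < pedrosaArea H₀ :=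
  pedrosaArea_strict_max_general H₀ huniq
end
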